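/- Let C be a Krull-Schmidt category with local descending chain condition on ideals in which rad_C* = 0, and let I be an ideal of C generated by a set of identity morphisms. Then I is idempotent; conversely any idempotent ideal of C is of this form. In particular, the map sending a class of objects closed under direct summands and finite direct sums to the ideal of morphisms factoring through its members gives a surjection onto the idempotent ideals of C. -/

import Mathlib

open CategoryTheory CategoryTheory.Limits

universe w v u

structure CatIdeal (C : Type u) [Category.{v} C] [Preadditive C] where
  mem : ∀ {X Y : C}, (X ⟶ Y) → Prop
  zero_mem : ∀ {X Y : C}, mem (0 : X ⟶ Y)
  add_mem : ∀ {X Y : C} {f g : X ⟶ Y}, mem f → mem g → mem (f + g)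
  comp_mem_left : ∀ {X Y Z : C} {f : X ⟶ Y} (g : Y ⟶ Z), mem f → mem (f ≫ g)
  comp_mem_right : ∀ {X Y Z : C} (f : X ⟶ Y) {g : Y ⟶ Z}, mem g → mem (f ≫ g)

namespace CatIdeal

variable {C : Type u} [Category.{v} C] [Preadditive C]

instance : LE (CatIdeal C) :=
  ⟨fun I J => ∀ {X Y : C} {f : X ⟶ Y}, I.mem f → J.mem f⟩

/-- The ideal of all morphisms. -/
def top (C : Type u) [Category.{v} C] [Preadditive C] : CatIdeal C where
  mem _ := True
  zero_mem := trivial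
  add_mem := by intros; trivial
  comp_mem_left := by intros; trivial
  comp_mem_right := by intros; trivial

/-- The ideal generated by a class of morphisms. -/
def span (S : ∀ {X Y : C}, (X ⟶ Y) → Prop) : CatIdeal C where
  mem f := ∀ J : CatIdeal C, (∀ {A B : C} {g : A ⟶ B}, S g → J.mem g) → J.mem f
  zero_mem := fun J _ => J.zero_mem
  add_mem := by intro X Y f g hf hg J hS; exact J.add_mem (hf J hS) (hg J hS)
  comp_mem_left := by intro X Y Z f g hf J hS; exact J.comp_mem_left g (hf J hS)
  comp_mem_right := by intro X Y Z f g hg J hS; exact J.comp_mem_right f (hg J hS)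

/-- The product of two ideals: the ideal generated by all composites `g ≫ h`
with `g ∈ I` and `h ∈ J`. -/
def mul (I J : CatIdeal C) : CatIdeal C :=
  span (fun {X Z} f => ∃ (Y : C) (g : X ⟶ Y) (h : Y ⟶ Z), I.mem g ∧ J.mem h ∧ f = g ≫ h)

/-- An ideal is idempotent if it equals its square. -/
def IsIdempotent (I : CatIdeal C) : Prop := I = I.mul I

/-- The intersection of a family of ideals. -/
def iInter {ι : Sort*} (F : ι → CatIdeal C) : CatIdeal C where
  mem f := ∀ i, (F i).mem f
  zero_mem := fun i => (F i).zero_mem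
  add_mem := by intro X Y f g hf hg i; exact (F i).add_mem (hf i) (hg i)
  comp_mem_left := by intro X Y Z f g hf i; exact (F i).comp_mem_left g (hf i)
  comp_mem_right := by intro X Y Z f g hg i; exact (F i).comp_mem_right f (hg i)

/-- Finite powers of an ideal: `npow I n` is the ideal generated by `n`-fold
composites of morphisms from `I` (with `npow I 0` the ideal of all morphisms). -/
def npow (I : CatIdeal C) : ℕ → CatIdeal C
  | 0 => top C
  | n + 1 => (npow I n).mul I

/-- The largest limit-or-zero ordinal `≤ α`, namely `ω * (α / ω)`. -/
noncomputable def limitPart (α : Ordinal.{w}) : Ordinal.{w} :=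
  Ordinal.omega0 * (α / Ordinal.omega0)

theorem limitPart_lt {α : Ordinal.{w}} (h0 : α ≠ 0) (hl : ¬ Order.IsSuccLimit α) :
    limitPart α < α := by
  have hle : limitPart α ≤ α := Ordinal.mul_div_le α Ordinal.omega0
  rcases lt_or_eq_of_le hle with h | h
  · exact h
  · exfalso
    rcases eq_or_ne (α / Ordinal.omega0) 0 with hq | hq
    · exact h0 (by rw [← h]; simp [limitPart, hq])
    · exact hl (by rw [← h]; exact Ordinal.isSuccLimit_mul_left Ordinal.isSuccLimit_omega0 (pos_iff_ne_zero.2 hq))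

end CatIdeal

open Ordinal Classical in
/-- Transfinite powers of an ideal `I`: `tpow I 0` is the ideal of all morphisms,
`tpow I n` (for finite `n ≥ 1`) is the ideal generated by `n`-fold composites of
morphisms from `I`, `tpow I α = ⋂_{β < α} tpow I β` at limit ordinals `α`, and
`tpow I (β + n) = (tpow I β) ^ (n + 1)` for `β` limit and `1 ≤ n < ω`. -/
noncomputable def CatIdeal.tpow {C : Type u} [Category.{v} C] [Preadditive C]
    (I : CatIdeal C) : Ordinal.{w} → CatIdeal C
  | α =>
    if h0 : α = 0 then CatIdeal.top C
    else if hl : Order.IsSuccLimit α then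
      CatIdeal.iInter (fun β : {β : Ordinal.{w} // β < α} =>
        have := β.2
        CatIdeal.tpow I β.1)
    else
      (have : Ordinal.pred α < α :=
        Ordinal.pred_lt_iff_not_isSuccPrelimit.2 (fun hp => hl (Ordinal.isSuccLimit_iff.2 ⟨h0, hp⟩))
       CatIdeal.tpow I (Ordinal.pred α)).mul
        (if Ordinal.omega0 ≤ α then
          have := CatIdeal.limitPart_lt h0 hl
          CatIdeal.tpow I (CatIdeal.limitPart α)
         else I)
  termination_by α => α

namespace CatIdeal

/-- The intersection `I* = ⋂_α I^α` of all transfinite powers of `I`. -/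
noncomputable def tstar {C : Type u} [Category.{v} C] [Preadditive C] (I : CatIdeal C) : CatIdeal C :=
  iInter (fun α : Ordinal.{v} => tpow I α)

end CatIdeal

section KS

open CategoryTheory CategoryTheory.Limits

variable (C : Type u) [Category.{v} C] [Preadditive C]

/-- `X` is a biproduct (finite direct sum) of the finite family `Y`,
witnessed by projections and inclusions. -/
def IsBiproductOf (X : C) {n : ℕ} (Y : Fin n → C) : Prop :=
  ∃ (p : ∀ i, X ⟶ Y i) (s : ∀ i, Y i ⟶ X),
    (∀ i, s i ≫ p i = 𝟙 (Y i)) ∧ (∀ i j, i ≠ j → s i ≫ p j = 0) ∧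
    (∑ i, p i ≫ s i) = 𝟙 X

/-- An object is indecomposable if it is nonzero and has no idempotent endomorphisms
other than `0` and the identity (i.e. it admits no nontrivial direct sum decomposition). -/
def IsIndecomposableObj (X : C) : Prop :=
  ¬ IsZero X ∧ ∀ e : X ⟶ X, e ≫ e = e → e = 0 ∨ e = 𝟙 X

/-- The radical of a Krull-Schmidt category: the ideal generated by all non-invertible
morphisms between indecomposable objects. -/
def catRadical : CatIdeal C :=
  CatIdeal.span (fun {X Y} f => IsIndecomposableObj C X ∧ IsIndecomposableObj C Y ∧ ¬ IsIso f)

/-- The transfinite radical `rad_C* = ⋂_α rad_C^α`. -/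
noncomputable def catTransRadical : CatIdeal C := CatIdeal.tstar (catRadical C)

/-- A Krull-Schmidt category: every object decomposes as a finite direct sum of objects
with local endomorphism rings. -/
def IsKrullSchmidt : Prop :=
  ∀ X : C, ∃ (n : ℕ) (Y : Fin n → C),
    (∀ i, IsLocalRing (End (Y i))) ∧ IsBiproductOf C X Y

/-- Local descending chain condition on ideals: every descending chain of ideals,
evaluated at any fixed pair of objects, stabilizes. -/
def HasLocalDCC : Prop :=
  ∀ (I : ℕ → CatIdeal C), (∀ n, I (n + 1) ≤ I n) →
    ∀ X Y : C, ∃ n, ∀ m, n ≤ m → ∀ f : X ⟶ Y, (I m).mem f ↔ (I n).mem f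

/-- The ideal generated by the identity morphisms of the objects in `S`. -/
def identityIdeal (S : Set C) : CatIdeal C :=
  CatIdeal.span (fun {X Y} f => ∃ h : X = Y, X ∈ S ∧ f = CategoryTheory.eqToHom h)

/-- An ideal is zero if it consists exactly of the zero morphisms. -/
def CatIdeal.IsZeroIdeal {C : Type u} [Category.{v} C] [Preadditive C] (I : CatIdeal C) : Prop :=
  ∀ {X Y : C} {f : X ⟶ Y}, I.mem f → f = 0

end KS


/-!
Let `I` be idempotent and `J` the ideal generated by the identities lying in `I`. Then
`I ⊆ J + rad^α` for every ordinal `α`. At successor steps this follows from `I = I²` and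
`I ⊆ J + rad`; the latter holds because in the Krull-Schmidt decomposition of a morphism of `I`
each invertible component puts an identity into `I` and each other component is radical. At
limit steps local d.c.c. makes the powers `rad^β`, `β < α`, stabilise on every Hom-group.
Stabilising once more, `rad^α` agrees with `rad* = 0` on a given Hom-group for some `α`,
whence `I = J`.
-/

theorem Ordinal.not_isSuccPrelimit_of_not_isSuccLimit {α : Ordinal.{w}} (h0 : α ≠ 0)
    (hl : ¬ Order.IsSuccLimit α) : ¬ Order.IsSuccPrelimit α :=
  fun hp => hl (Ordinal.isSuccLimit_iff.2 ⟨h0, hp⟩)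

namespace CatIdeal

variable {C : Type u} [Category.{v} C] [Preadditive C]

theorem ext {I J : CatIdeal C} (h : ∀ {X Y : C} (f : X ⟶ Y), I.mem f ↔ J.mem f) : I = J := by
  obtain ⟨mI, _, _, _, _⟩ := I
  obtain ⟨mJ, _, _, _, _⟩ := J
  obtain rfl : @mI = @mJ := by
    funext X Y f
    exact propext (h f)
  rfl

theorem le_antisymm {I J : CatIdeal C} (hIJ : I ≤ J) (hJI : J ≤ I) : I = J :=
  ext fun _ => ⟨hIJ, hJI⟩

theorem mem_span_of_mem {S : ∀ {X Y : C}, (X ⟶ Y) → Prop} {X Y : C} {f : X ⟶ Y} (hf : S f) :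
    (span S).mem f :=
  fun _ hK => hK hf

theorem span_le {S : ∀ {X Y : C}, (X ⟶ Y) → Prop} {K : CatIdeal C}
    (h : ∀ {X Y : C} {f : X ⟶ Y}, S f → K.mem f) : span S ≤ K :=
  fun hf => hf K h

theorem comp_mem_mul {I J : CatIdeal C} {X Y Z : C} {g : X ⟶ Y} {h : Y ⟶ Z}
    (hg : I.mem g) (hh : J.mem h) : (I.mul J).mem (g ≫ h) :=
  mem_span_of_mem ⟨Y, g, h, hg, hh, rfl⟩

theorem mul_le_left (I J : CatIdeal C) : I.mul J ≤ I :=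
  span_le fun ⟨_, _, b, ha, _, hf⟩ => hf ▸ I.comp_mem_left b ha

theorem sum_mem (I : CatIdeal C) {X Y : C} {ι : Type*} (s : Finset ι) {f : ι → (X ⟶ Y)}
    (h : ∀ i ∈ s, I.mem (f i)) : I.mem (∑ i ∈ s, f i) := by
  classical
  induction s using Finset.induction with
  | empty => simpa using I.zero_mem
  | insert i s hi ih =>
    rw [Finset.sum_insert hi]
    exact I.add_mem (h i (Finset.mem_insert_self i s))
      (ih fun j hj => h j (Finset.mem_insert_of_mem hj))

instance : Add (CatIdeal C) where
  add I J :=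
    { mem f := ∃ g h, I.mem g ∧ J.mem h ∧ f = g + h
      zero_mem := ⟨0, 0, I.zero_mem, J.zero_mem, (add_zero 0).symm⟩
      add_mem := by
        rintro X Y _ _ ⟨a, b, ha, hb, rfl⟩ ⟨c, d, hc, hd, rfl⟩
        exact ⟨a + c, b + d, I.add_mem ha hc, J.add_mem hb hd, add_add_add_comm a b c d⟩
      comp_mem_left := by
        rintro X Y Z _ g ⟨a, b, ha, hb, rfl⟩
        exact ⟨a ≫ g, b ≫ g, I.comp_mem_left g ha, J.comp_mem_left g hb, Preadditive.add_comp ..⟩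
      comp_mem_right := by
        rintro X Y Z f _ ⟨a, b, ha, hb, rfl⟩
        exact ⟨f ≫ a, f ≫ b, I.comp_mem_right f ha, J.comp_mem_right f hb,
          Preadditive.comp_add ..⟩ }

theorem le_add_left (I J : CatIdeal C) : I ≤ I + J :=
  fun {_ _ f} hf => ⟨f, 0, hf, J.zero_mem, (add_zero f).symm⟩

theorem le_add_right (I J : CatIdeal C) : J ≤ I + J :=
  fun {_ _ f} hf => ⟨0, f, I.zero_mem, hf, (zero_add f).symm⟩

theorem le_add_mul_of_isIdempotent {I J R T : CatIdeal C} (hI : I.IsIdempotent)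
    (hR : I ≤ J + R) (hT : I ≤ J + T) : I ≤ J + R.mul T := by
  intro X Y f hf
  rw [hI] at hf
  refine span_le (fun {X Y f} ⟨Z, a, b, ha, hb, hf⟩ => ?_) hf
  obtain ⟨j₁, r, hj₁, hr, rfl⟩ := hR ha
  obtain ⟨j₂, t, hj₂, ht, rfl⟩ := hT hb
  refine ⟨j₁ ≫ (j₂ + t) + r ≫ j₂, r ≫ t,
    J.add_mem (J.comp_mem_left _ hj₁) (J.comp_mem_right r hj₂), comp_mem_mul hr ht, ?_⟩
  rw [hf]
  simp only [Preadditive.add_comp, Preadditive.comp_add]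
  abel

theorem tpow_zero (I : CatIdeal C) : tpow I (0 : Ordinal.{w}) = top C := by
  rw [tpow]
  simp

theorem tpow_of_isSuccLimit (I : CatIdeal C) {α : Ordinal.{w}} (hl : Order.IsSuccLimit α) :
    tpow I α = iInter (fun β : {β : Ordinal.{w} // β < α} => tpow I β.1) := by
  rw [tpow]
  simp [(Ordinal.isSuccLimit_iff.1 hl).1, hl]

theorem tpow_of_not_isSuccLimit (I : CatIdeal C) {α : Ordinal.{w}} (h0 : α ≠ 0)
    (hl : ¬ Order.IsSuccLimit α) :
    tpow I α = (tpow I (Ordinal.pred α)).mul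
      (if Ordinal.omega0 ≤ α then tpow I (limitPart α) else I) := by
  rw [tpow]
  simp [h0, hl]

theorem tpow_anti (I : CatIdeal C) {α β : Ordinal.{w}} (hβα : β ≤ α) : tpow I α ≤ tpow I β := by
  induction α using WellFoundedLT.induction generalizing β with
  | ind α ih =>
    intro X Y f hf
    rcases hβα.eq_or_lt with rfl | hβα
    · exact hf
    have h0 : α ≠ 0 := hβα.ne_bot
    by_cases hl : Order.IsSuccLimit α
    · rw [tpow_of_isSuccLimit I hl] at hf
      exact hf ⟨β, hβα⟩
    · have hp := Ordinal.not_isSuccPrelimit_of_not_isSuccLimit h0 hl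
      rw [tpow_of_not_isSuccLimit I h0 hl] at hf
      have hβp : β ≤ Ordinal.pred α := by
        rw [← Ordinal.succ_pred_eq_iff_not_isSuccPrelimit.2 hp] at hβα
        exact Order.lt_succ_iff.1 hβα
      exact ih _ (Ordinal.pred_lt_iff_not_isSuccPrelimit.2 hp) hβp (mul_le_left _ _ hf)

end CatIdeal

namespace HasLocalDCC

variable {C : Type u} [Category.{v} C] [Preadditive C]

theorem exists_le_forall_mem (hdcc : HasLocalDCC C) {ι : Type*} [LinearOrder ι]
    (F : ι → CatIdeal C) (hF : ∀ {α β : ι}, β ≤ α → F α ≤ F β) (X Y : C) {Q : Set ι}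
    (hQ : Q.Nonempty) :
    ∃ γ₀ ∈ Q, ∀ f : X ⟶ Y, (F γ₀).mem f → ∀ γ ∈ Q, (F γ).mem f := by
  by_contra! h
  choose f hf γ hγ hfγ using h
  have hlt : ∀ δ (hδ : δ ∈ Q), δ < γ δ hδ :=
    fun δ hδ => lt_of_not_ge fun hle => hfγ δ hδ (hF hle (hf δ hδ))
  let chain : ℕ → Q := fun n => Nat.rec ⟨hQ.some, hQ.some_mem⟩ (fun _ δ => ⟨γ δ δ.2, hγ δ δ.2⟩) n
  have hchain : ∀ n, F (chain (n + 1)).1 ≤ F (chain n).1 :=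
    fun n _ _ _ hf => hF (hlt _ (chain n).2).le hf
  obtain ⟨n, hn⟩ := hdcc (fun n => F (chain n).1) hchain X Y
  exact hfγ _ (chain n).2 ((hn (n + 1) n.le_succ _).2 (hf _ (chain n).2))

end HasLocalDCC

section IdentityIdeal

variable {C : Type u} [Category.{v} C] [Preadditive C]

def CatIdeal.objects (I : CatIdeal C) : Set C := {Z | I.mem (𝟙 Z)}

theorem CatIdeal.mem_objects_of_retract {I : CatIdeal C} {X Y : C} (hX : X ∈ I.objects)
    (s : Y ⟶ X) (r : X ⟶ Y) (hsr : s ≫ r = 𝟙 Y) : Y ∈ I.objects := by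
  show I.mem (𝟙 Y)
  simpa [hsr] using I.comp_mem_right s (I.comp_mem_left r hX)

theorem IsBiproductOf.mem_objects {I : CatIdeal C} {X : C} {n : ℕ} {Y : Fin n → C}
    (hX : IsBiproductOf C X Y) (hY : ∀ i, Y i ∈ I.objects) : X ∈ I.objects := by
  obtain ⟨p, s, -, -, hps⟩ := hX
  simpa [CatIdeal.objects, hps] using
    I.sum_mem Finset.univ fun i _ => I.comp_mem_right (p i) (I.comp_mem_left (s i) (hY i))

theorem CatIdeal.identityIdeal_objects_le (I : CatIdeal C) : identityIdeal C I.objects ≤ I :=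
  CatIdeal.span_le fun ⟨hXY, hX, hf⟩ => by subst hXY hf; exact hX

theorem id_mem_identityIdeal {S : Set C} {X : C} (hX : X ∈ S) : (identityIdeal C S).mem (𝟙 X) :=
  CatIdeal.mem_span_of_mem ⟨rfl, hX, rfl⟩

theorem identityIdeal_isIdempotent (S : Set C) : (identityIdeal C S).IsIdempotent := by
  refine CatIdeal.le_antisymm (CatIdeal.span_le fun {X _ f} ⟨hXY, hX, hf⟩ => ?_)
    (CatIdeal.mul_le_left _ _)
  subst hXY hf
  simpa using CatIdeal.comp_mem_mul (id_mem_identityIdeal hX) (id_mem_identityIdeal hX)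

end IdentityIdeal

namespace CatIdeal

variable {C : Type u} [Category.{v} C] [Preadditive C]

open ZeroObject in
def factorIdeal [HasZeroObject C] [HasBinaryBiproducts C] (I : CatIdeal C) : CatIdeal C where
  mem {X Y} f := ∃ Z ∈ I.objects, ∃ (g : X ⟶ Z) (h : Z ⟶ Y), f = g ≫ h
  zero_mem := ⟨0, show I.mem (𝟙 0) by simpa only [id_zero] using I.zero_mem, 0, 0, by simp⟩
  add_mem := by
    rintro X Y _ _ ⟨Z₁, hZ₁, g₁, h₁, rfl⟩ ⟨Z₂, hZ₂, g₂, h₂, rfl⟩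
    refine ⟨Z₁ ⊞ Z₂, ?_, biprod.lift g₁ g₂, biprod.desc h₁ h₂, by simp⟩
    have : I.mem (biprod.fst ≫ 𝟙 Z₁ ≫ biprod.inl + biprod.snd ≫ 𝟙 Z₂ ≫ biprod.inr) :=
      I.add_mem (I.comp_mem_right _ (I.comp_mem_left _ hZ₁))
        (I.comp_mem_right _ (I.comp_mem_left _ hZ₂))
    simpa [objects, biprod.total] using this
  comp_mem_left := by
    rintro X Y W _ k ⟨Z, hZ, g, h, rfl⟩
    exact ⟨Z, hZ, g, h ≫ k, by simp⟩
  comp_mem_right := by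
    rintro X Y W f _ ⟨Z, hZ, g, h, rfl⟩
    exact ⟨Z, hZ, f ≫ g, h, by simp⟩

variable [HasZeroObject C] [HasBinaryBiproducts C]

theorem factorIdeal_le (I : CatIdeal C) : I.factorIdeal ≤ I := by
  rintro X Y _ ⟨Z, hZ, g, h, rfl⟩
  simpa using I.comp_mem_right g (I.comp_mem_left h hZ)

theorem identityIdeal_objects_le_factorIdeal (I : CatIdeal C) :
    identityIdeal C I.objects ≤ I.factorIdeal :=
  span_le fun {X _ _} ⟨hXY, hX, hf⟩ => by subst hXY hf; exact ⟨X, hX, 𝟙 X, 𝟙 X, by simp⟩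

end CatIdeal

section KrullSchmidt

variable {C : Type u} [Category.{v} C] [Preadditive C]

theorem isIndecomposableObj_of_isLocalRing (X : C) [IsLocalRing (End X)] :
    IsIndecomposableObj C X := by
  refine ⟨fun hX => one_ne_zero (α := End X) (hX.eq_of_src _ _), fun e he => ?_⟩
  let x : End X := e
  have hidem : IsIdempotentElem x := he
  rcases IsLocalRing.isUnit_or_isUnit_of_add_one (add_sub_cancel x 1) with hu | hu
  · exact Or.inr ((IsIdempotentElem.iff_eq_one_of_isUnit hu).1 hidem)
  · exact Or.inl (sub_eq_self.1 ((IsIdempotentElem.iff_eq_one_of_isUnit hu).1 hidem.one_sub))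

theorem IsBiproductOf.le_of_components {X Y : C} {n m : ℕ} {A : Fin n → C} {B : Fin m → C}
    (hX : IsBiproductOf C X A) (hY : IsBiproductOf C Y B) {I K : CatIdeal C}
    (h : ∀ i j (g : A i ⟶ B j), I.mem g → K.mem g) (f : X ⟶ Y) (hf : I.mem f) : K.mem f := by
  obtain ⟨pA, sA, -, -, hA⟩ := hX
  obtain ⟨pB, sB, -, -, hB⟩ := hY
  have hsum : f = ∑ i, ∑ j, pA i ≫ (sA i ≫ f ≫ pB j) ≫ sB j := by
    conv_lhs => rw [← Category.id_comp f, ← Category.comp_id f, ← hA, ← hB]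
    simp only [Preadditive.sum_comp, Preadditive.comp_sum, Category.assoc]
    exact Finset.sum_comm
  rw [hsum]
  refine K.sum_mem _ fun i _ => K.sum_mem _ fun j _ => ?_
  exact K.comp_mem_right _ (K.comp_mem_left _ (h i j _ (I.comp_mem_right _ (I.comp_mem_left _ hf))))

theorem le_identityIdeal_objects_add_catRadical (hKS : IsKrullSchmidt C) (I : CatIdeal C) :
    I ≤ identityIdeal C I.objects + catRadical C := by
  intro X Y f hf
  obtain ⟨n, A, hA, hX⟩ := hKS X
  obtain ⟨m, B, hB, hY⟩ := hKS Y
  refine hX.le_of_components hY (fun i j g hg => ?_) f hf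
  by_cases hiso : IsIso g
  · refine CatIdeal.le_add_left _ _ ?_
    have hid : I.mem (𝟙 (A i)) := by simpa using I.comp_mem_left (inv g) hg
    simpa using (identityIdeal C I.objects).comp_mem_left g (id_mem_identityIdeal hid)
  · exact CatIdeal.le_add_right _ _ (CatIdeal.mem_span_of_mem
      ⟨isIndecomposableObj_of_isLocalRing _, isIndecomposableObj_of_isLocalRing _, hiso⟩)

end KrullSchmidt

section Idempotent

variable {C : Type u} [Category.{v} C] [Preadditive C]

theorem le_identityIdeal_objects_add_tpow (hKS : IsKrullSchmidt C) (hdcc : HasLocalDCC C)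
    {I : CatIdeal C} (hI : I.IsIdempotent) (α : Ordinal.{w}) :
    I ≤ identityIdeal C I.objects + (catRadical C).tpow α := by
  induction α using WellFoundedLT.induction with
  | ind α ih =>
    intro X Y f hf
    rcases eq_or_ne α 0 with rfl | h0
    · rw [CatIdeal.tpow_zero]
      exact CatIdeal.le_add_right _ (CatIdeal.top C) trivial
    by_cases hl : Order.IsSuccLimit α
    · obtain ⟨γ, hγα, hγ⟩ := hdcc.exists_le_forall_mem (catRadical C).tpow
        (CatIdeal.tpow_anti _) X Y (Q := Set.Iio α) ⟨0, pos_iff_ne_zero.2 h0⟩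
      obtain ⟨j, r, hj, hr, rfl⟩ := ih γ hγα hf
      refine ⟨j, r, hj, ?_, rfl⟩
      rw [CatIdeal.tpow_of_isSuccLimit _ hl]
      exact fun β => hγ r hr β β.2
    · have hp := Ordinal.not_isSuccPrelimit_of_not_isSuccLimit h0 hl
      rw [CatIdeal.tpow_of_not_isSuccLimit _ h0 hl]
      refine CatIdeal.le_add_mul_of_isIdempotent hI
        (ih _ (Ordinal.pred_lt_iff_not_isSuccPrelimit.2 hp)) ?_ hf
      split_ifs
      · exact ih _ (CatIdeal.limitPart_lt h0 hl)
      · exact le_identityIdeal_objects_add_catRadical hKS I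

theorem eq_identityIdeal_objects (hKS : IsKrullSchmidt C) (hdcc : HasLocalDCC C)
    (hrad : (catTransRadical C).IsZeroIdeal) {I : CatIdeal C} (hI : I.IsIdempotent) :
    I = identityIdeal C I.objects := by
  refine CatIdeal.le_antisymm (fun {X Y f} hf => ?_) I.identityIdeal_objects_le
  obtain ⟨γ, -, hγ⟩ := hdcc.exists_le_forall_mem (catRadical C).tpow
    (CatIdeal.tpow_anti _) X Y (Q := Set.univ) Set.univ_nonempty
  obtain ⟨j, r, hj, hr, rfl⟩ := le_identityIdeal_objects_add_tpow hKS hdcc hI γ hf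
  rw [hrad (fun β => hγ r hr β trivial), add_zero]
  exact hj

end Idempotent

open CategoryTheory in
theorem stmt17_general {C : Type u} [CategoryTheory.Category.{v} C] [CategoryTheory.Preadditive C] [CategoryTheory.Limits.HasFiniteBiproducts C] (hKS : IsKrullSchmidt C) (hdcc : HasLocalDCC C)
    (hrad : (catTransRadical C).IsZeroIdeal) :
    (∀ S : Set C, (identityIdeal C S).IsIdempotent) ∧
    (∀ I : CatIdeal C, I.IsIdempotent → ∃ S : Set C, I = identityIdeal C S) ∧
    (∀ I : CatIdeal C, I.IsIdempotent →
      ∃ D : Set C,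
        (∀ X ∈ D, ∀ Y : C, (∃ (s : Y ⟶ X) (r : X ⟶ Y), s ≫ r = 𝟙 Y) → Y ∈ D) ∧
        (∀ (n : ℕ) (Y : Fin n → C), (∀ i, Y i ∈ D) →
          ∀ X : C, IsBiproductOf C X Y → X ∈ D) ∧
        (∀ {X Y : C} (f : X ⟶ Y),
          I.mem f ↔ ∃ Z ∈ D, ∃ (g : X ⟶ Z) (h : Z ⟶ Y), f = g ≫ h)) := by
  have := hasBinaryBiproducts_of_finite_biproducts C
  refine ⟨identityIdeal_isIdempotent,
    fun I hI => ⟨_, eq_identityIdeal_objects hKS hdcc hrad hI⟩,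
    fun I hI => ⟨I.objects, fun X hX Y ⟨s, r, hsr⟩ => I.mem_objects_of_retract hX s r hsr,
      fun n Y hY X hX => hX.mem_objects hY, fun f => ⟨fun hf => ?_, fun hf => I.factorIdeal_le hf⟩⟩⟩
  rw [eq_identityIdeal_objects hKS hdcc hrad hI] at hf
  exact I.identityIdeal_objects_le_factorIdeal hf

open CategoryTheory in
/-- With vanishing transfinite radical, the idempotent ideals are exactly
the ideals generated by sets of identity morphisms; equivalently, every idempotent ideal
consists of the morphisms factoring through a class of objects closed under direct
summands and finite direct sums. -/
theorem stmt17 {C : Type u} [CategoryTheory.Category.{v} C] [CategoryTheory.Preadditive C] [CategoryTheory.Limits.HasFiniteBiproducts C] [CategoryTheory.EssentiallySmall.{v} C] (hKS : IsKrullSchmidt C) (hdcc : HasLocalDCC C)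
    (hrad : (catTransRadical C).IsZeroIdeal) :
    (∀ S : Set C, (identityIdeal C S).IsIdempotent) ∧
    (∀ I : CatIdeal C, I.IsIdempotent → ∃ S : Set C, I = identityIdeal C S) ∧
    (∀ I : CatIdeal C, I.IsIdempotent →
      ∃ D : Set C,
        (∀ X ∈ D, ∀ Y : C, (∃ (s : Y ⟶ X) (r : X ⟶ Y), s ≫ r = 𝟙 Y) → Y ∈ D) ∧
        (∀ (n : ℕ) (Y : Fin n → C), (∀ i, Y i ∈ D) →
          ∀ X : C, IsBiproductOf C X Y → X ∈ D) ∧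
        (∀ {X Y : C} (f : X ⟶ Y),
          I.mem f ↔ ∃ Z ∈ D, ∃ (g : X ⟶ Z) (h : Z ⟶ Y), f = g ≫ h)) :=
  stmt17_general hKS hdcc hrad
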